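/- arXiv:0706.3550 — 8 statements merged into one kernel-verified Lean document; each statement's English description precedes it below -/
import Mathlib

section
/- If x : [0,T) → ℝ^N satisfies x'(t) = -∑_{i=1}^g (m_i / ⟨x(t), n_i⟩) n_i with m_i > 0 and ⟨x(t), n_i⟩ < 0 for all t ∈ [0,T) and all i, and x(0) lies in the sphere of radius r₀ > 0, then T ≤ r₀²/(2n), where n = ∑ m_i. In particular the maximal time of existence is finite. -/
open scoped RealInnerProductSpace

/-- If `x : [0,T) → ℝ^N` solves the reduced MCF ODE in the chamber `{⟨·, nᵢ⟩ < 0}` with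
`‖x 0‖ = r₀`, then `T ≤ r₀²/(2n)` where `n = ∑ mᵢ`: the flow exists only for finite time. -/
theorem stmt_1 {N g : ℕ} (T : ℝ) (hT : 0 < T)
    (nv : Fin g → EuclideanSpace ℝ (Fin N)) (m : Fin g → ℝ)
    (hm : ∀ i, 0 < m i) (n : ℝ) (hn : n = ∑ i, m i) (hnpos : 0 < n)
    (r₀ : ℝ) (hr₀ : 0 < r₀)
    (x : ℝ → EuclideanSpace ℝ (Fin N)) (hx0 : ‖x 0‖ = r₀)
    (hneg : ∀ t ∈ Set.Ico (0 : ℝ) T, ∀ i, ⟪x t, nv i⟫ < 0)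
    (hode : ∀ t ∈ Set.Ico (0 : ℝ) T,
      HasDerivAt x (-∑ i, (m i / ⟪x t, nv i⟫) • nv i) t) :
    T ≤ r₀ ^ 2 / (2 * n) := by
  set f : ℝ → ℝ := fun t => ⟪x t, x t⟫ + 2 * n * t with hf
  have hderiv : ∀ t ∈ Set.Ico (0 : ℝ) T, HasDerivAt f 0 t := by
    intro t ht
    have hx' := hode t ht
    have h1 : HasDerivAt (fun s => ⟪x s, x s⟫)
        (⟪x t, -∑ i, (m i / ⟪x t, nv i⟫) • nv i⟫ +
          ⟪-∑ i, (m i / ⟪x t, nv i⟫) • nv i, x t⟫) t := hx'.inner ℝ hx'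
    have hval : ⟪x t, -∑ i, (m i / ⟪x t, nv i⟫) • nv i⟫ = -n := by
      rw [inner_neg_right, inner_sum, hn, neg_inj]
      refine Finset.sum_congr rfl fun i _ => ?_
      rw [real_inner_smul_right]
      exact div_mul_cancel₀ _ (hneg t ht i).ne
    have hval' : ⟪-∑ i, (m i / ⟪x t, nv i⟫) • nv i, x t⟫ = -n := by
      rw [real_inner_comm]; exact hval
    rw [hval, hval'] at h1
    have h2 : HasDerivAt (fun s : ℝ => 2 * n * s) (2 * n) t := by
      simpa using (hasDerivAt_id t).const_mul (2 * n)
    have := h1.add h2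
    simpa [hf] using (by ring_nf; ring_nf at this; exact this :
      HasDerivAt (fun s => ⟪x s, x s⟫ + 2 * n * s) 0 t)
  have key : ∀ t ∈ Set.Ico (0 : ℝ) T, t ≤ r₀ ^ 2 / (2 * n) := by
    intro t ht
    have hsub : Set.Icc (0 : ℝ) t ⊆ Set.Ico 0 T :=
      fun s hs => ⟨hs.1, lt_of_le_of_lt hs.2 ht.2⟩
    have hcont : ContinuousOn f (Set.Icc 0 t) := fun s hs =>
      ((hderiv s (hsub hs)).continuousAt).continuousWithinAt
    have hconst := constant_of_has_deriv_right_zero hcont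
      (fun s hs => ((hderiv s (hsub (Set.mem_Icc_of_Ico hs))).hasDerivWithinAt))
      t (Set.right_mem_Icc.2 ht.1)
    have hfx0 : ⟪x 0, x 0⟫ = r₀ ^ 2 := by
      rw [real_inner_self_eq_norm_sq, hx0]
    have hpos : (0 : ℝ) ≤ ⟪x t, x t⟫ := real_inner_self_nonneg
    have : ⟪x t, x t⟫ + 2 * n * t = r₀ ^ 2 := by
      simp only [hf] at hconst
      rw [hfx0] at hconst
      simpa using hconst
    have h2n : 0 < 2 * n := by linarith
    rw [le_div_iff₀ h2n]
    nlinarith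
  by_contra h
  push_neg at h
  have hc : 0 < r₀ ^ 2 / (2 * n) := by positivity
  set t := (r₀ ^ 2 / (2 * n) + T) / 2 with htdef
  have ht1 : r₀ ^ 2 / (2 * n) < t := by rw [htdef]; linarith
  have ht2 : t < T := by rw [htdef]; linarith
  have := key t ⟨by linarith, ht2⟩
  linarith
end

section
/- Let x₁, x₂ : [0,T) → ℝ^N both satisfy the ODE x'(t) = -∑_{i=1}^g (m_i/⟨x(t), n_i⟩) n_i, with m_i > 0 and ⟨x_j(t), n_i⟩ < 0 for all i, j, t. Then t ↦ ‖x₁(t) - x₂(t)‖² is monotone nondecreasing on [0,T). Consequently, if x₁(0) ≠ x₂(0) then x₁(t) ≠ x₂(t) for all t. -/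
open scoped RealInnerProductSpace

/-- If `x₁, x₂` both solve the reduced MCF ODE in the chamber `{⟨·, nᵢ⟩ < 0}`, then
`t ↦ ‖x₁ t - x₂ t‖²` is monotone nondecreasing on `[0,T)`; consequently if
`x₁ 0 ≠ x₂ 0` then `x₁ t ≠ x₂ t` for all `t`. -/
theorem stmt_2 {N g : ℕ} (T : ℝ) (hT : 0 < T)
    (nv : Fin g → EuclideanSpace ℝ (Fin N)) (m : Fin g → ℝ)
    (hm : ∀ i, 0 < m i)
    (x₁ x₂ : ℝ → EuclideanSpace ℝ (Fin N))
    (hneg₁ : ∀ t ∈ Set.Ico (0 : ℝ) T, ∀ i, ⟪x₁ t, nv i⟫ < 0)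
    (hneg₂ : ∀ t ∈ Set.Ico (0 : ℝ) T, ∀ i, ⟪x₂ t, nv i⟫ < 0)
    (hode₁ : ∀ t ∈ Set.Ico (0 : ℝ) T,
      HasDerivAt x₁ (-∑ i, (m i / ⟪x₁ t, nv i⟫) • nv i) t)
    (hode₂ : ∀ t ∈ Set.Ico (0 : ℝ) T,
      HasDerivAt x₂ (-∑ i, (m i / ⟪x₂ t, nv i⟫) • nv i) t) :
    MonotoneOn (fun t => ‖x₁ t - x₂ t‖ ^ 2) (Set.Ico (0 : ℝ) T) ∧
      (x₁ 0 ≠ x₂ 0 → ∀ t ∈ Set.Ico (0 : ℝ) T, x₁ t ≠ x₂ t) := by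
  set f : ℝ → ℝ := fun t => ‖x₁ t - x₂ t‖ ^ 2 with hfdef
  have key : ∀ t ∈ Set.Ico (0 : ℝ) T, HasDerivAt f
      (⟪x₁ t - x₂ t, (-∑ i, (m i / ⟪x₁ t, nv i⟫) • nv i) -
        (-∑ i, (m i / ⟪x₂ t, nv i⟫) • nv i)⟫ +
       ⟪(-∑ i, (m i / ⟪x₁ t, nv i⟫) • nv i) -
        (-∑ i, (m i / ⟪x₂ t, nv i⟫) • nv i), x₁ t - x₂ t⟫) t := by
    intro t ht
    have hd := (hode₁ t ht).sub (hode₂ t ht)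
    have h := hd.inner ℝ hd
    have hfe : f = fun t => ⟪x₁ t - x₂ t, x₁ t - x₂ t⟫ := by
      funext s
      rw [real_inner_self_eq_norm_sq]
    rw [hfe]
    exact h
  have hnonneg : ∀ t ∈ Set.Ico (0 : ℝ) T,
      0 ≤ ⟪(-∑ i, (m i / ⟪x₁ t, nv i⟫) • nv i) -
        (-∑ i, (m i / ⟪x₂ t, nv i⟫) • nv i), x₁ t - x₂ t⟫ := by
    intro t ht
    have hsum : (-∑ i, (m i / ⟪x₁ t, nv i⟫) • nv i) -
        (-∑ i, (m i / ⟪x₂ t, nv i⟫) • nv i)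
        = ∑ i, (m i / ⟪x₂ t, nv i⟫ - m i / ⟪x₁ t, nv i⟫) • nv i := by
      rw [neg_sub_neg, ← Finset.sum_sub_distrib]
      simp [sub_smul]
    rw [hsum, sum_inner]
    apply Finset.sum_nonneg
    intro i _
    set a := ⟪x₁ t, nv i⟫ with ha
    set b := ⟪x₂ t, nv i⟫ with hb
    have haneg : a < 0 := hneg₁ t ht i
    have hbneg : b < 0 := hneg₂ t ht i
    rw [real_inner_smul_left, inner_sub_right]
    have h1 : ⟪nv i, x₁ t⟫ = a := real_inner_comm _ _
    have h2 : ⟪nv i, x₂ t⟫ = b := real_inner_comm _ _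
    rw [h1, h2]
    have ha0 : a ≠ 0 := haneg.ne
    have hb0 : b ≠ 0 := hbneg.ne
    have heq : (m i / b - m i / a) * (a - b) = m i * (a - b) ^ 2 / (a * b) := by
      field_simp
    rw [heq]
    exact div_nonneg (mul_nonneg (hm i).le (sq_nonneg _)) (mul_pos_of_neg_of_neg haneg hbneg).le
  have hmono : MonotoneOn f (Set.Ico (0 : ℝ) T) := by
    apply monotoneOn_of_deriv_nonneg (convex_Ico 0 T)
    · intro t ht
      exact (key t ht).continuousAt.continuousWithinAt
    · rw [interior_Ico]
      intro t ht
      exact ((key t (Set.Ioo_subset_Ico_self ht)).differentiableAt).differentiableWithinAt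
    · rw [interior_Ico]
      intro t ht
      have ht' := Set.Ioo_subset_Ico_self ht
      rw [(key t ht').deriv]
      have h1 := hnonneg t ht'
      have h2 : (0:ℝ) ≤ ⟪x₁ t - x₂ t, (-∑ i, (m i / ⟪x₁ t, nv i⟫) • nv i) -
          (-∑ i, (m i / ⟪x₂ t, nv i⟫) • nv i)⟫ := by
        rw [real_inner_comm]; exact h1
      linarith
  refine ⟨hmono, fun hne t ht heq => ?_⟩
  have h0 : (0 : ℝ) ∈ Set.Ico (0 : ℝ) T := ⟨le_refl _, hT⟩
  have hle := hmono h0 ht ht.1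
  have hpos : 0 < f 0 := by
    have : x₁ 0 - x₂ 0 ≠ 0 := sub_ne_zero.mpr hne
    have : 0 < ‖x₁ 0 - x₂ 0‖ := norm_pos_iff.mpr this
    positivity
  have hzero : f t = 0 := by
    simp [hfdef, heq]
  linarith
end

section
/- Let x : [0,T) → ℝ^N solve x'(t) = -∑_{i=1}^g (m_i/⟨x(t), n_i⟩) n_i with m_i > 0, ⟨x(t), n_i⟩ < 0 for all i, t, and suppose the limit x(T) := lim_{t→T⁻} x(t) exists, with I = { i : ⟨x(T), n_i⟩ = 0 } nonempty and ⟨x(T), n_i⟩ < 0 for i ∉ I. Then lim_{t→T⁻} ‖x(t) - x(T)‖²/(T - t) = 2 ∑_{i∈I} m_i. -/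
open scoped RealInnerProductSpace Topology
open Filter

/-!
With `F t = ‖x t - x(T)‖²` and `G t = T - t`, both tending to `0` as `t → T⁻`, L'Hôpital's rule
reduces the claim to the limit of `F' / G' = 2 ∑ᵢ mᵢ ⟨x - x(T), nᵢ⟩ / ⟨x, nᵢ⟩`. For a wall `i ∈ I`
the ratio is identically `1`, since `⟨x(T), nᵢ⟩ = 0`; for `i ∉ I` its numerator tends to `0` while
its denominator tends to `⟨x(T), nᵢ⟩ ≠ 0`.
-/

section InnerRatio

variable {α E : Type*} [NormedAddCommGroup E] [InnerProductSpace ℝ E]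
  {l : Filter α} {x : α → E} {x₀ v : E}

theorem tendsto_inner_sub_div_inner_of_inner_eq_zero (h₀ : ⟪x₀, v⟫ = 0)
    (hne : ∀ᶠ a in l, ⟪x a, v⟫ ≠ 0) :
    Tendsto (fun a => ⟪x a - x₀, v⟫ / ⟪x a, v⟫) l (𝓝 1) := by
  refine tendsto_const_nhds.congr' ?_
  filter_upwards [hne] with a ha
  rw [inner_sub_left, h₀, sub_zero, div_self ha]

theorem tendsto_inner_sub_div_inner_of_inner_ne_zero (hx : Tendsto x l (𝓝 x₀))
    (h₀ : ⟪x₀, v⟫ ≠ 0) :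
    Tendsto (fun a => ⟪x a - x₀, v⟫ / ⟪x a, v⟫) l (𝓝 0) := by
  have hinner : Tendsto (fun a => ⟪x a, v⟫) l (𝓝 ⟪x₀, v⟫) := hx.inner tendsto_const_nhds
  have hnum : Tendsto (fun a => ⟪x a - x₀, v⟫) l (𝓝 0) := by
    simpa only [inner_sub_left, sub_self] using hinner.sub_const ⟪x₀, v⟫
  rw [← zero_div ⟪x₀, v⟫]
  exact hnum.div hinner h₀

theorem tendsto_sum_mul_inner_sub_div_inner {ι : Type*} [Fintype ι] (hx : Tendsto x l (𝓝 x₀))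
    (n : ι → E) (m : ι → ℝ) (I : Finset ι) (hwall : ∀ i ∈ I, ⟪x₀, n i⟫ = 0)
    (hoff : ∀ i ∉ I, ⟪x₀, n i⟫ ≠ 0) (hne : ∀ i ∈ I, ∀ᶠ a in l, ⟪x a, n i⟫ ≠ 0) :
    Tendsto (fun a => ∑ i, m i * (⟪x a - x₀, n i⟫ / ⟪x a, n i⟫)) l (𝓝 (∑ i ∈ I, m i)) := by
  classical
  have hterm : ∀ i, Tendsto (fun a => m i * (⟪x a - x₀, n i⟫ / ⟪x a, n i⟫)) l
      (𝓝 (m i * if i ∈ I then 1 else 0)) := by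
    intro i
    refine tendsto_const_nhds.mul ?_
    split_ifs with hi
    · exact tendsto_inner_sub_div_inner_of_inner_eq_zero (hwall i hi) (hne i hi)
    · exact tendsto_inner_sub_div_inner_of_inner_ne_zero hx (hoff i hi)
  simpa only [mul_ite, mul_one, mul_zero, Finset.sum_ite_mem, Finset.univ_inter]
    using tendsto_finsetSum Finset.univ fun i _ => hterm i

end InnerRatio

theorem inner_sum_div_inner_smul {E ι : Type*} [NormedAddCommGroup E] [InnerProductSpace ℝ E]
    [Fintype ι] (y z : E) (n : ι → E) (m : ι → ℝ) :
    ⟪y, ∑ i, (m i / ⟪z, n i⟫) • n i⟫ = ∑ i, m i * (⟪y, n i⟫ / ⟪z, n i⟫) := by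
  simp only [inner_sum, real_inner_smul_right, div_mul_eq_mul_div, mul_div_assoc]

theorem stmt_5_general {N g : ℕ} (T : ℝ) (hT : 0 < T)
    (nv : Fin g → EuclideanSpace ℝ (Fin N)) (m : Fin g → ℝ)
    (x : ℝ → EuclideanSpace ℝ (Fin N))
    (hneg : ∀ t ∈ Set.Ico (0 : ℝ) T, ∀ i, ⟪x t, nv i⟫ < 0)
    (hode : ∀ t ∈ Set.Ico (0 : ℝ) T,
      HasDerivAt x (-∑ i, (m i / ⟪x t, nv i⟫) • nv i) t)
    (xT : EuclideanSpace ℝ (Fin N))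
    (hlim : Filter.Tendsto x (nhdsWithin T (Set.Iio T)) (nhds xT))
    (I : Finset (Fin g))
    (hIwall : ∀ i, i ∈ I ↔ ⟪xT, nv i⟫ = 0)
    (hIoff : ∀ i ∉ I, ⟪xT, nv i⟫ < 0) :
    Filter.Tendsto (fun t => ‖x t - xT‖ ^ 2 / (T - t))
      (nhdsWithin T (Set.Iio T)) (nhds (2 * ∑ i ∈ I, m i)) := by
  have hderiv : ∀ t ∈ Set.Ioo 0 T, HasDerivAt (fun t => ‖x t - xT‖ ^ 2)
      (2 * ⟪x t - xT, -∑ i, (m i / ⟪x t, nv i⟫) • nv i⟫) t :=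
    fun t ht => ((hode t (Set.Ioo_subset_Ico_self ht)).sub_const xT).norm_sq
  have hne : ∀ i ∈ I, ∀ᶠ t in 𝓝[<] T, ⟪x t, nv i⟫ ≠ 0 := fun i _ => by
    filter_upwards [Ioo_mem_nhdsLT hT] with t ht
    exact (hneg t (Set.Ioo_subset_Ico_self ht) i).ne
  have hratio := tendsto_sum_mul_inner_sub_div_inner hlim nv m I
    (fun i hi => (hIwall i).mp hi) (fun i hi => (hIoff i hi).ne) hne
  refine HasDerivAt.lhopital_zero_left_on_Ioo hT hderiv
    (fun t _ => (hasDerivAt_id t).const_sub T) (fun _ _ => by norm_num) ?_ ?_ ?_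
  · simpa using ((hlim.sub_const xT).norm.pow 2)
  · simpa using (tendsto_nhdsWithin_of_tendsto_nhds (tendsto_id (x := 𝓝 T))).const_sub T
  · simpa only [inner_neg_right, inner_sum_div_inner_smul, neg_div_neg_eq, div_one, mul_neg]
      using hratio.const_mul 2

/-- If `x` solves the reduced MCF ODE in the chamber on `[0,T)`, converges to `xT` as
`t → T⁻`, where `I = {i : ⟨xT, nᵢ⟩ = 0}` is nonempty and `⟨xT, nᵢ⟩ < 0` off `I`, then
`‖x t - xT‖²/(T - t) → 2 ∑_{i ∈ I} mᵢ`. -/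
theorem stmt_5 {N g : ℕ} (T : ℝ) (hT : 0 < T)
    (nv : Fin g → EuclideanSpace ℝ (Fin N)) (m : Fin g → ℝ)
    (hm : ∀ i, 0 < m i)
    (x : ℝ → EuclideanSpace ℝ (Fin N))
    (hneg : ∀ t ∈ Set.Ico (0 : ℝ) T, ∀ i, ⟪x t, nv i⟫ < 0)
    (hode : ∀ t ∈ Set.Ico (0 : ℝ) T,
      HasDerivAt x (-∑ i, (m i / ⟪x t, nv i⟫) • nv i) t)
    (xT : EuclideanSpace ℝ (Fin N))
    (hlim : Filter.Tendsto x (nhdsWithin T (Set.Iio T)) (nhds xT))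
    (I : Finset (Fin g)) (hI : I.Nonempty)
    (hIwall : ∀ i, i ∈ I ↔ ⟪xT, nv i⟫ = 0)
    (hIoff : ∀ i ∉ I, ⟪xT, nv i⟫ < 0) :
    Filter.Tendsto (fun t => ‖x t - xT‖ ^ 2 / (T - t))
      (nhdsWithin T (Set.Iio T)) (nhds (2 * ∑ i ∈ I, m i)) :=
  stmt_5_general T hT nv m x hneg hode xT hlim I hIwall hIoff
end

section
/- Let x : [0,T) → ℝ^{k+1} solve x_i'(t) = m ∑_{j≠i} 1/(x_j(t) - x_i(t)) for i = 1,...,k+1, with the x_i(t) pairwise distinct. Let y_r(t) = σ_r(x_1(t),...,x_{k+1}(t)) denote the r-th elementary symmetric polynomial evaluated along the flow. Then y_r'(t) = (m/2)(k-r+3)(k-r+2) y_{r-2}(t) for 2 ≤ r ≤ k+1. In particular y_2'(t) = m·k(k+1)/2, and each y_r(t) is a polynomial in t. -/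
/-! Differentiating `σ_r` along the flow gives `m ∑_{|S|=r} ∑_{i∈S} (∏_{S∖i} x) ∑_{j≠i} 1/(x_j - x_i)`.
Regroup by `A = S ∖ {i}`: the terms with `i, j ∉ A` cancel in pairs by antisymmetry, leaving
`∑_{j∈A, i∉A}`. Regroup again by `B = A ∖ {j}`: what multiplies `∏_B x` is `∑ x_j/(x_j - x_i)` over
ordered pairs of distinct indices outside `B`, and pairing `(j, i)` with `(i, j)` shows that this
is the number of unordered such pairs, `(k-r+3)(k-r+2)/2`. Since `y_0 = 1` and `y_1' = 0`, induction
on `r` in steps of two shows that every `y_r` is a polynomial in `t`. -/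

/-- The `r`-th elementary symmetric polynomial of `v : Fin (k+1) → ℝ`. -/
def esymmA {k : ℕ} (r : ℕ) (v : Fin (k + 1) → ℝ) : ℝ :=
  ∑ s ∈ Finset.univ.powersetCard r, ∏ i ∈ s, v i

open Finset

section FinsetSums

variable {ι K : Type*} [Field K]

-- The diagonal terms are `1 / 0 = 0`; off the diagonal the swap `(i, j) ↦ (j, i)` changes signs.
theorem sum_sum_one_div_sub_eq_zero (C : Finset ι) (v : ι → K) :
    ∑ i ∈ C, ∑ j ∈ C, 1 / (v j - v i) = 0 := by
  rw [← sum_product']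
  refine sum_involution (fun p _ => p.swap) (fun p _ => ?_) (fun p _ hp hswap => ?_)
    (fun p hp => mem_product.2 (mem_product.1 hp).symm) fun _ _ => rfl
  · rw [Prod.fst_swap, Prod.snd_swap, ← neg_sub, div_neg, neg_add_cancel]
  · obtain ⟨i, j⟩ := p
    obtain rfl : j = i := congrArg Prod.fst hswap
    simp at hp

theorem two_mul_sum_sum_erase_div_sub [DecidableEq ι] (C : Finset ι) {v : ι → K}
    (hv : Set.InjOn v C) :
    2 * ∑ j ∈ C, ∑ i ∈ C.erase j, v j / (v j - v i) = #C * (#C - 1) := by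
  have hpair : ∀ j ∈ C, ∀ i ∈ C.erase j, v j / (v j - v i) + v i / (v i - v j) = 1 := by
    intro j hj i hi
    obtain ⟨hij, hi⟩ := mem_erase.1 hi
    have hne : v j - v i ≠ 0 := sub_ne_zero.2 fun h => hij (hv hi hj h.symm)
    rw [← neg_sub (v j), div_neg, ← sub_eq_add_neg, ← sub_div, div_self hne]
  have hswap : ∑ j ∈ C, ∑ i ∈ C.erase j, v i / (v i - v j)
      = ∑ j ∈ C, ∑ i ∈ C.erase j, v j / (v j - v i) :=
    sum_comm' fun j i => by simp only [mem_erase]; tauto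
  calc 2 * ∑ j ∈ C, ∑ i ∈ C.erase j, v j / (v j - v i)
      = ∑ j ∈ C, ∑ i ∈ C.erase j, (v j / (v j - v i) + v i / (v i - v j)) := by
        rw [two_mul]; nth_rw 2 [← hswap]; simp only [← sum_add_distrib]
    _ = ∑ j ∈ C, ((#C : K) - 1) := by
        refine sum_congr rfl fun j hj => ?_
        rw [sum_congr rfl (hpair j hj), sum_const, card_erase_of_mem hj, nsmul_one,
          Nat.cast_pred (card_pos.2 ⟨j, hj⟩)]
    _ = #C * (#C - 1) := by rw [sum_const, nsmul_eq_mul]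

end FinsetSums

section Esymm

variable {ι K : Type*} [Fintype ι] [DecidableEq ι]

theorem sum_powersetCard_succ_sum_erase {M : Type*} [AddCommMonoid M] (r : ℕ)
    (F : Finset ι → ι → M) :
    ∑ S ∈ univ.powersetCard (r + 1), ∑ i ∈ S, F (S.erase i) i
      = ∑ A ∈ univ.powersetCard r, ∑ i ∈ Aᶜ, F A i := by
  rw [sum_sigma', sum_sigma']
  refine sum_nbij' (fun p => ⟨p.1.erase p.2, p.2⟩) (fun p => ⟨insert p.2 p.1, p.2⟩)
    ?_ ?_ ?_ ?_ fun _ _ => rfl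
  · rintro ⟨S, i⟩ hp
    simp only [mem_sigma, mem_powersetCard_univ, mem_compl, mem_erase] at hp ⊢
    exact ⟨by rw [card_erase_of_mem hp.2, hp.1, Nat.add_sub_cancel], by simp⟩
  · rintro ⟨A, i⟩ hp
    simp only [mem_sigma, mem_powersetCard_univ, mem_compl] at hp ⊢
    exact ⟨by rw [card_insert_of_notMem hp.2, hp.1], mem_insert_self _ _⟩
  · rintro ⟨S, i⟩ hp
    simp only [mem_sigma, mem_powersetCard_univ] at hp
    simp [insert_erase hp.2]
  · rintro ⟨A, i⟩ hp
    simp only [mem_sigma, mem_powersetCard_univ, mem_compl] at hp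
    simp [erase_insert hp.2]

variable [Field K]

def esymmDeriv (r : ℕ) (v w : ι → K) : K :=
  ∑ S ∈ univ.powersetCard r, ∑ i ∈ S, (∏ j ∈ S.erase i, v j) * w i

theorem esymmDeriv_succ (r : ℕ) (v w : ι → K) :
    esymmDeriv (r + 1) v w = ∑ A ∈ univ.powersetCard r, (∏ j ∈ A, v j) * ∑ i ∈ Aᶜ, w i := by
  simp only [esymmDeriv, sum_powersetCard_succ_sum_erase r fun A i => (∏ j ∈ A, v j) * w i,
    mul_sum]

theorem esymmDeriv_const_mul (r : ℕ) (c : K) (v w : ι → K) :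
    esymmDeriv r v (fun i => c * w i) = c * esymmDeriv r v w := by
  simp only [esymmDeriv, mul_sum, mul_left_comm c]

def sumInvGap (v : ι → K) (i : ι) : K :=
  ∑ j ∈ univ \ {i}, 1 / (v j - v i)

theorem sumInvGap_eq_sum (v : ι → K) (i : ι) : sumInvGap v i = ∑ j, 1 / (v j - v i) := by
  rw [sumInvGap, ← sum_sdiff (subset_univ {i}), sum_singleton, sub_self, div_zero, add_zero]

theorem sum_compl_sumInvGap (A : Finset ι) (v : ι → K) :
    ∑ i ∈ Aᶜ, sumInvGap v i = ∑ j ∈ A, ∑ i ∈ Aᶜ, 1 / (v j - v i) := by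
  simp only [sumInvGap_eq_sum, ← sum_add_sum_compl A, sum_add_distrib,
    sum_sum_one_div_sub_eq_zero, add_zero]
  exact sum_comm

theorem esymmDeriv_one_sumInvGap (v : ι → K) : esymmDeriv 1 v (sumInvGap v) = 0 := by
  simp [esymmDeriv_succ, sum_compl_sumInvGap]

theorem two_mul_esymmDeriv_add_two_sumInvGap {v : ι → K} (hv : Function.Injective v) (r : ℕ) :
    2 * esymmDeriv (r + 2) v (sumInvGap v)
      = (Fintype.card ι - r : ℕ) * ((Fintype.card ι - r : ℕ) - 1)
          * ∑ B ∈ univ.powersetCard r, ∏ j ∈ B, v j := by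
  set F : Finset ι → ι → K :=
    fun B j => (∏ i ∈ B, v i) * (v j * ∑ i ∈ (insert j B)ᶜ, 1 / (v j - v i))
  have hsplit : ∀ A ∈ univ.powersetCard (r + 1),
      (∏ j ∈ A, v j) * ∑ i ∈ Aᶜ, sumInvGap v i = ∑ j ∈ A, F (A.erase j) j := by
    intro A _
    rw [sum_compl_sumInvGap, mul_sum]
    refine sum_congr rfl fun j hj => ?_
    simp only [F, insert_erase hj, ← mul_prod_erase A v hj]
    ring
  have hF : ∀ B ∈ univ.powersetCard r, ∑ j ∈ Bᶜ, F B j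
      = (∏ i ∈ B, v i) * ∑ j ∈ Bᶜ, ∑ i ∈ Bᶜ.erase j, v j / (v j - v i) := by
    intro B _
    simp only [F, compl_insert, mul_sum, mul_one_div]
  rw [esymmDeriv_succ, sum_congr rfl hsplit, sum_powersetCard_succ_sum_erase,
    sum_congr rfl hF, mul_sum, mul_sum]
  refine sum_congr rfl fun B hB => ?_
  rw [mul_left_comm, two_mul_sum_sum_erase_div_sub _ hv.injOn, card_compl,
    (mem_powersetCard_univ.1 hB)]
  ring

theorem hasDerivAt_sum_powersetCard_prod {𝕜 : Type*} [NontriviallyNormedField 𝕜]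
    {x : 𝕜 → ι → 𝕜} {x' : ι → 𝕜} {t : 𝕜} (hx : ∀ i, HasDerivAt (fun s => x s i) (x' i) t)
    (r : ℕ) :
    HasDerivAt (fun s => ∑ S ∈ univ.powersetCard r, ∏ i ∈ S, x s i) (esymmDeriv r (x t) x') t :=
  HasDerivAt.fun_sum fun S _ => by
    simpa only [smul_eq_mul] using HasDerivAt.fun_finsetProd fun i (_ : i ∈ S) => hx i

end Esymm

open Polynomial in
theorem Polynomial.derivative_surjective {K : Type*} [Field K] [CharZero K] :
    Function.Surjective (derivative : K[X] → K[X]) := by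
  intro p
  induction p using Polynomial.induction_on' with
  | add p q hp hq =>
    obtain ⟨P, rfl⟩ := hp
    obtain ⟨Q, rfl⟩ := hq
    exact ⟨P + Q, derivative_add⟩
  | monomial n a =>
    refine ⟨monomial (n + 1) (a / (n + 1)), ?_⟩
    rw [derivative_monomial, Nat.add_sub_cancel, Nat.cast_add_one,
      div_mul_cancel₀ a (Nat.cast_add_one_ne_zero n)]

open Polynomial in
theorem exists_polynomial_eq_of_hasDerivAt {s : Set ℝ} (hs : Convex ℝ s) {f : ℝ → ℝ} {p : ℝ[X]}
    (hf : ∀ t ∈ s, HasDerivAt f (p.eval t) t) : ∃ q : ℝ[X], ∀ t ∈ s, f t = q.eval t := by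
  obtain ⟨P, rfl⟩ := derivative_surjective p
  rcases s.eq_empty_or_nonempty with rfl | ⟨t₀, ht₀⟩
  · exact ⟨0, by simp⟩
  refine ⟨P + C (f t₀ - P.eval t₀), fun t ht => ?_⟩
  have hzero : ∀ t ∈ s, HasDerivWithinAt (fun t => f t - P.eval t) 0 s t := fun t ht => by
    simpa only [sub_self] using ((hf t ht).fun_sub (P.hasDerivAt t)).hasDerivWithinAt
  have hconst := hs.norm_image_sub_le_of_norm_hasDerivWithin_le hzero
    (fun _ _ => (norm_zero (E := ℝ)).le) ht₀ ht
  rw [zero_mul, norm_le_zero_iff, sub_eq_zero] at hconst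
  rw [eval_add, eval_C]
  linarith

section Flow

variable {k : ℕ} {m t : ℝ} {x : ℝ → Fin (k + 1) → ℝ}
  (hx : ∀ i, HasDerivAt (fun s => x s i) (m * sumInvGap (x t) i) t)
include hx

theorem hasDerivAt_esymmA_flow (r : ℕ) :
    HasDerivAt (fun s => esymmA r (x s)) (m * esymmDeriv r (x t) (sumInvGap (x t))) t := by
  rw [← esymmDeriv_const_mul]
  exact hasDerivAt_sum_powersetCard_prod hx r

theorem hasDerivAt_esymmA_one_flow : HasDerivAt (fun s => esymmA 1 (x s)) 0 t := by
  simpa only [esymmDeriv_one_sumInvGap, mul_zero] using hasDerivAt_esymmA_flow hx 1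

theorem hasDerivAt_esymmA_add_two_flow (hinj : Function.Injective (x t)) (r : ℕ) :
    HasDerivAt (fun s => esymmA (r + 2) (x s))
      (m / 2 * (k + 1 - r : ℕ) * ((k + 1 - r : ℕ) - 1) * esymmA r (x t)) t := by
  have hkey := two_mul_esymmDeriv_add_two_sumInvGap hinj r
  rw [Fintype.card_fin] at hkey
  convert hasDerivAt_esymmA_flow hx (r + 2) using 1
  rw [esymmA]
  linear_combination (-m / 2) * hkey

end Flow

theorem exists_polynomial_esymmA_flow {k : ℕ} {m : ℝ} {s : Set ℝ} (hs : Convex ℝ s)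
    {x : ℝ → Fin (k + 1) → ℝ} (hinj : ∀ t ∈ s, Function.Injective (x t))
    (hx : ∀ t ∈ s, ∀ i, HasDerivAt (fun u => x u i) (m * sumInvGap (x t) i) t) (r : ℕ) :
    ∃ p : Polynomial ℝ, ∀ t ∈ s, esymmA r (x t) = p.eval t := by
  induction r using Nat.twoStepInduction with
  | zero => exact ⟨1, fun t _ => by simp [esymmA]⟩
  | one =>
    exact exists_polynomial_eq_of_hasDerivAt hs (p := 0) fun t ht => by
      simpa using hasDerivAt_esymmA_one_flow (hx t ht)
  | more r ih _ =>
    obtain ⟨p, hp⟩ := ih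
    refine exists_polynomial_eq_of_hasDerivAt hs
      (p := Polynomial.C (m / 2 * (k + 1 - r : ℕ) * ((k + 1 - r : ℕ) - 1)) * p) fun t ht => ?_
    simpa only [Polynomial.eval_mul, Polynomial.eval_C, ← hp t ht] using
      hasDerivAt_esymmA_add_two_flow (hx t ht) (hinj t ht) r

theorem stmt_8_general {k : ℕ} (T : ℝ) (m : ℝ)
    (x : ℝ → Fin (k + 1) → ℝ)
    (hdist : ∀ t ∈ Set.Ico (0 : ℝ) T, ∀ i j, i ≠ j → x t i ≠ x t j)
    (hode : ∀ t ∈ Set.Ico (0 : ℝ) T, ∀ i,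
      HasDerivAt (fun s => x s i)
        (m * ∑ j ∈ Finset.univ \ {i}, 1 / (x t j - x t i)) t) :
    (∀ r, 2 ≤ r → r ≤ k + 1 → ∀ t ∈ Set.Ico (0 : ℝ) T,
        HasDerivAt (fun s => esymmA r (x s))
          (m / 2 * ((k : ℝ) - r + 3) * ((k : ℝ) - r + 2) * esymmA (r - 2) (x t)) t) ∧
      (∀ t ∈ Set.Ico (0 : ℝ) T,
        HasDerivAt (fun s => esymmA 2 (x s)) (m * k * (k + 1) / 2) t) ∧
      (∀ r ≤ k + 1, ∃ p : Polynomial ℝ, ∀ t ∈ Set.Ico (0 : ℝ) T,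
        esymmA r (x t) = p.eval t) := by
  have hinj : ∀ t ∈ Set.Ico (0 : ℝ) T, Function.Injective (x t) :=
    fun t ht i j => not_imp_not.1 (hdist t ht i j)
  have hderiv (r : ℕ) (t : ℝ) (ht : t ∈ Set.Ico 0 T) :=
    hasDerivAt_esymmA_add_two_flow (hode t ht) (hinj t ht) r
  refine ⟨fun r hr2 hrk t ht => ?_, fun t ht => ?_,
    fun r _ => exists_polynomial_esymmA_flow (convex_Ico 0 T) hinj hode r⟩
  · obtain ⟨r, rfl⟩ := Nat.exists_eq_add_of_le' hr2
    rw [Nat.add_sub_cancel]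
    convert hderiv r t ht using 2
    push_cast [Nat.cast_sub (by omega : r ≤ k + 1)]
    ring
  · convert hderiv 0 t ht using 1
    rw [esymmA, powersetCard_zero, sum_singleton, prod_empty, Nat.sub_zero]
    push_cast
    ring

/-- If `x` solves the `A_k` MCF ODE `xᵢ' = m ∑_{j≠i} 1/(xⱼ - xᵢ)` with pairwise distinct
coordinates, and `y_r(t) = σ_r(x(t))`, then `y_r' = (m/2)(k-r+3)(k-r+2) y_{r-2}` for
`2 ≤ r ≤ k+1`; in particular `y₂' = m·k(k+1)/2` and each `y_r` is a polynomial in `t`. -/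
theorem stmt_8 {k : ℕ} (T : ℝ) (hT : 0 < T) (m : ℝ) (hm : 0 < m)
    (x : ℝ → Fin (k + 1) → ℝ)
    (hdist : ∀ t ∈ Set.Ico (0 : ℝ) T, ∀ i j, i ≠ j → x t i ≠ x t j)
    (hode : ∀ t ∈ Set.Ico (0 : ℝ) T, ∀ i,
      HasDerivAt (fun s => x s i)
        (m * ∑ j ∈ Finset.univ \ {i}, 1 / (x t j - x t i)) t) :
    (∀ r, 2 ≤ r → r ≤ k + 1 → ∀ t ∈ Set.Ico (0 : ℝ) T,
        HasDerivAt (fun s => esymmA r (x s))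
          (m / 2 * ((k : ℝ) - r + 3) * ((k : ℝ) - r + 2) * esymmA (r - 2) (x t)) t) ∧
      (∀ t ∈ Set.Ico (0 : ℝ) T,
        HasDerivAt (fun s => esymmA 2 (x s)) (m * k * (k + 1) / 2) t) ∧
      (∀ r ≤ k + 1, ∃ p : Polynomial ℝ, ∀ t ∈ Set.Ico (0 : ℝ) T,
        esymmA r (x t) = p.eval t) :=
  stmt_8_general T m x hdist hode
end

section
/- Let y : [0,T) → ℝ^k solve the B_k mean curvature flow ODE (1/2) y_i'(t) = -m₂ - m₁ ∑_{j≠i} 2 y_i(t)/(y_i(t) - y_j(t)), with m₁, m₂ ≥ 0 and y_i(t) pairwise distinct. Let ζ_j(t) = s_j(y_1(t),...,y_k(t)) be the j-th elementary symmetric polynomial along the flow. Then ζ_j'(t) = -2(k-j+1)(m₂ + m₁(k-j)) ζ_{j-1}(t) for 1 ≤ j ≤ k (with ζ_0 = 1). -/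
/-- The `j`-th elementary symmetric polynomial of `v : Fin k → ℝ`. -/
def esymmB {k : ℕ} (j : ℕ) (v : Fin k → ℝ) : ℝ :=
  ∑ s ∈ Finset.univ.powersetCard j, ∏ i ∈ s, v i

/-!
Differentiating `ζ_{m+1} = ∑_{|S|=m+1} ∏_S y` and splitting each `(m+1)`-set into an
`m`-set `S` and one new index `i` gives `ζ_{m+1}' = ∑_{|S|=m} (∏_S y) ∑_{i∉S} yᵢ'`.
In `∑_{i∉S} yᵢ'` the constant part contributes `-2m₂(k-m)`. The terms `yᵢ/(yᵢ-y_l)` with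
`i, l ∉ S` add up to `1` in pairs `(i,l), (l,i)`, hence to `(k-m)(k-m-1)/2`. The terms with
`l ∈ S` cancel after summing over `S`: removing `l` from `S` turns them into
`y_l yᵢ/(yᵢ-y_l) ∏_R y` with `i, l ∉ R`, which is antisymmetric in `(i,l)`.
-/

open Finset

namespace Finset

variable {α : Type*} [DecidableEq α]

theorem sum_powersetCard_succ_sum_erase {M : Type*} [AddCommMonoid M] (U : Finset α) (m : ℕ)
    (f : α → Finset α → M) :
    ∑ S ∈ U.powersetCard (m + 1), ∑ i ∈ S, f i (S.erase i)
      = ∑ S ∈ U.powersetCard m, ∑ i ∈ U \ S, f i S := by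
  rw [sum_sigma', sum_sigma']
  refine sum_nbij' (fun p => ⟨p.1.erase p.2, p.2⟩) (fun p => ⟨insert p.2 p.1, p.2⟩)
    ?_ ?_ ?_ ?_ fun _ _ => rfl
  · rintro ⟨S, i⟩ hp
    simp only [mem_sigma, mem_powersetCard] at hp ⊢
    exact ⟨⟨(erase_subset i S).trans hp.1.1, by rw [card_erase_of_mem hp.2, hp.1.2]; rfl⟩,
      mem_sdiff.2 ⟨hp.1.1 hp.2, notMem_erase i S⟩⟩
  · rintro ⟨S, i⟩ hp
    simp only [mem_sigma, mem_powersetCard, mem_sdiff] at hp ⊢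
    exact ⟨⟨insert_subset hp.2.1 hp.1.1, by rw [card_insert_of_notMem hp.2.2, hp.1.2]⟩,
      mem_insert_self i S⟩
  · rintro ⟨S, i⟩ hp
    simp only [mem_sigma] at hp
    simp [insert_erase hp.2]
  · rintro ⟨S, i⟩ hp
    simp only [mem_sigma, mem_sdiff] at hp
    simp [erase_insert hp.2.2]

theorem two_mul_sum_sum_erase_of_add_swap {R : Type*} [CommRing R] (U : Finset α)
    (g : α → α → R) (c : R) (h : ∀ i ∈ U, ∀ l ∈ U, i ≠ l → g i l + g l i = c) :
    2 * ∑ i ∈ U, ∑ l ∈ U.erase i, g i l = #U * (#U - 1 : R) * c := by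
  have hswap : ∑ i ∈ U, ∑ l ∈ U.erase i, g l i = ∑ i ∈ U, ∑ l ∈ U.erase i, g i l :=
    sum_comm' (by intro x y; simp only [mem_erase]; tauto)
  have hpair : ∀ i ∈ U, ∑ l ∈ U.erase i, (g i l + g l i) = (#U - 1 : R) * c := by
    intro i hi
    rw [sum_congr rfl fun l hl => h i hi l (mem_of_mem_erase hl) (ne_of_mem_erase hl).symm,
      sum_const, card_erase_of_mem hi, nsmul_eq_mul, Nat.cast_pred (card_pos.2 ⟨i, hi⟩)]
  calc 2 * ∑ i ∈ U, ∑ l ∈ U.erase i, g i l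
      = ∑ i ∈ U, ∑ l ∈ U.erase i, (g i l + g l i) := by
        simp only [sum_add_distrib, hswap]; ring
    _ = #U * (#U - 1 : R) * c := by
        rw [sum_congr rfl hpair, sum_const, nsmul_eq_mul, mul_assoc]

end Finset

section DividedDifferences

variable {α : Type*} [DecidableEq α]

theorem two_mul_sum_sum_erase_div_sub_s10 {v : α → ℝ} (hv : Function.Injective v)
    (U : Finset α) :
    2 * ∑ i ∈ U, ∑ l ∈ U.erase i, v i / (v i - v l) = #U * (#U - 1 : ℝ) := by
  rw [two_mul_sum_sum_erase_of_add_swap U _ 1 fun i _ l _ hil => ?_, mul_one]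
  have : v i - v l ≠ 0 := sub_ne_zero.2 (hv.ne hil)
  rw [← neg_sub (v i), div_neg, ← sub_eq_add_neg, ← sub_div, div_self this]

theorem sum_powersetCard_prod_mul_sum_div_sub_eq_zero [Fintype α] {v : α → ℝ}
    (hv : Function.Injective v) (m : ℕ) :
    ∑ S ∈ univ.powersetCard m, (∏ j ∈ S, v j) * ∑ i ∈ univ \ S, ∑ l ∈ S, v i / (v i - v l)
      = 0 := by
  let g : α → Finset α → ℝ := fun l R =>
    ∑ i ∈ (univ \ R).erase l, (v l * ∏ j ∈ R, v j) * (v i / (v i - v l))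
  have hpeel : ∀ S : Finset α,
      (∏ j ∈ S, v j) * ∑ i ∈ univ \ S, ∑ l ∈ S, v i / (v i - v l)
        = ∑ l ∈ S, g l (S.erase l) := by
    intro S
    rw [sum_comm, mul_sum]
    refine sum_congr rfl fun l hl => ?_
    rw [← mul_prod_erase S v hl, mul_sum]
    have hcompl : (univ \ S.erase l).erase l = univ \ S := by
      rw [sdiff_erase (mem_univ l), erase_insert fun h => (mem_sdiff.1 h).2 hl]
    simp only [g, hcompl]
  have hantisymm : ∀ R : Finset α, ∑ l ∈ univ \ R, g l R = 0 := by
    intro R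
    have h := two_mul_sum_sum_erase_of_add_swap (univ \ R)
      (fun l i => (v l * ∏ j ∈ R, v j) * (v i / (v i - v l))) 0 fun l _ i _ hli => by
        have : v i - v l ≠ 0 := sub_ne_zero.2 (hv.ne hli.symm)
        rw [← neg_sub (v i) (v l), div_neg]
        ring
    simpa using h
  simp only [hpeel]
  cases m with
  | zero => simp
  | succ m =>
    rw [sum_powersetCard_succ_sum_erase univ m g]
    exact sum_eq_zero fun R _ => hantisymm R

end DividedDifferences

section Flow

variable {k : ℕ}

noncomputable def velocityB (m₁ m₂ : ℝ) (v : Fin k → ℝ) (i : Fin k) : ℝ :=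
  -2 * m₂ - 4 * m₁ * ∑ l ∈ univ \ {i}, v i / (v i - v l)

theorem hasDerivAt_esymmB_succ {y : ℝ → Fin k → ℝ} {y' : Fin k → ℝ} {t : ℝ}
    (hy : ∀ i, HasDerivAt (fun s => y s i) (y' i) t) (m : ℕ) :
    HasDerivAt (fun s => esymmB (m + 1) (y s))
      (∑ S ∈ univ.powersetCard m, (∏ i ∈ S, y t i) * ∑ i ∈ univ \ S, y' i) t := by
  have h := HasDerivAt.fun_sum fun (S : Finset (Fin k)) (_ : S ∈ univ.powersetCard (m + 1)) =>
    HasDerivAt.fun_finsetProd (u := S) fun i _ => hy i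
  simp only [smul_eq_mul] at h
  rw [sum_powersetCard_succ_sum_erase univ m fun i R => (∏ j ∈ R, y t j) * y' i] at h
  simpa only [esymmB, mul_sum] using h

theorem sum_sdiff_velocityB {v : Fin k → ℝ} (hv : Function.Injective v) (m₁ m₂ : ℝ)
    (S : Finset (Fin k)) :
    ∑ i ∈ univ \ S, velocityB m₁ m₂ v i
      = -2 * ((k : ℝ) - #S) * (m₂ + m₁ * ((k : ℝ) - #S - 1))
        - 4 * m₁ * ∑ i ∈ univ \ S, ∑ l ∈ S, v i / (v i - v l) := by
  have hsplit : ∀ i ∈ univ \ S, univ \ {i} = S ∪ (univ \ S).erase i := by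
    intro i hi
    ext x
    simp only [mem_sdiff, mem_singleton, mem_union, mem_erase, mem_univ, true_and] at hi ⊢
    grind
  have hcard : (#(univ \ S) : ℝ) = k - #S := by
    have hSk : #S ≤ k := by simpa using card_le_univ S
    rw [card_univ_sdiff, Fintype.card_fin, Nat.cast_sub hSk]
  have hpairs := two_mul_sum_sum_erase_div_sub_s10 hv (univ \ S)
  rw [hcard] at hpairs
  calc ∑ i ∈ univ \ S, velocityB m₁ m₂ v i
      = ∑ i ∈ univ \ S, (-2 * m₂ - 4 * m₁ * ∑ l ∈ S, v i / (v i - v l)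
          - 4 * m₁ * ∑ l ∈ (univ \ S).erase i, v i / (v i - v l)) := by
        refine sum_congr rfl fun i hi => ?_
        rw [velocityB, hsplit i hi, sum_union (disjoint_sdiff.mono_right (erase_subset i _))]
        ring
    _ = _ := by
        simp only [sum_sub_distrib, sum_const, nsmul_eq_mul, hcard, ← mul_sum]
        linear_combination (-2 * m₁) * hpairs

theorem sum_powersetCard_prod_mul_sum_velocityB {v : Fin k → ℝ} (hv : Function.Injective v)
    (m₁ m₂ : ℝ) (m : ℕ) :
    ∑ S ∈ univ.powersetCard m, (∏ j ∈ S, v j) * ∑ i ∈ univ \ S, velocityB m₁ m₂ v i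
      = -2 * ((k : ℝ) - m) * (m₂ + m₁ * ((k : ℝ) - m - 1)) * esymmB m v := by
  calc ∑ S ∈ univ.powersetCard m, (∏ j ∈ S, v j) * ∑ i ∈ univ \ S, velocityB m₁ m₂ v i
      = ∑ S ∈ univ.powersetCard m, (-2 * ((k : ℝ) - m) * (m₂ + m₁ * ((k : ℝ) - m - 1))
          * ∏ j ∈ S, v j - 4 * m₁ * ((∏ j ∈ S, v j)
            * ∑ i ∈ univ \ S, ∑ l ∈ S, v i / (v i - v l))) := by
        refine sum_congr rfl fun S hS => ?_
        rw [sum_sdiff_velocityB hv, (mem_powersetCard_univ.1 hS)]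
        ring
    _ = _ := by
        rw [sum_sub_distrib, ← mul_sum, ← mul_sum,
          sum_powersetCard_prod_mul_sum_div_sub_eq_zero hv, esymmB, mul_zero, sub_zero]

end Flow

theorem stmt_10_general {k : ℕ} (T : ℝ) (m₁ m₂ : ℝ)
    (y : ℝ → Fin k → ℝ)
    (hdist : ∀ t ∈ Set.Ico (0 : ℝ) T, ∀ i j, i ≠ j → y t i ≠ y t j)
    (hode : ∀ t ∈ Set.Ico (0 : ℝ) T, ∀ i,
      HasDerivAt (fun s => y s i)
        (-2 * m₂ - 4 * m₁ * ∑ j ∈ Finset.univ \ {i}, y t i / (y t i - y t j)) t) :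
    ∀ j, 1 ≤ j → j ≤ k → ∀ t ∈ Set.Ico (0 : ℝ) T,
      HasDerivAt (fun s => esymmB j (y s))
        (-2 * ((k : ℝ) - j + 1) * (m₂ + m₁ * ((k : ℝ) - j)) * esymmB (j - 1) (y t)) t := by
  intro j hj _ t ht
  obtain ⟨m, rfl⟩ := Nat.exists_eq_add_of_le' hj
  have hinj : Function.Injective (y t) := fun i i' h => by_contra fun hii' => hdist t ht i i' hii' h
  convert hasDerivAt_esymmB_succ (y' := velocityB m₁ m₂ (y t)) (hode t ht) m using 1
  rw [sum_powersetCard_prod_mul_sum_velocityB hinj, Nat.add_sub_cancel]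
  push_cast
  ring

/-- If `y` solves the `B_k` MCF ODE `yᵢ' = -2m₂ - 4m₁ ∑_{j≠i} yᵢ/(yᵢ - yⱼ)` with pairwise
distinct coordinates, and `ζ_j(t) = s_j(y(t))`, then
`ζ_j' = -2(k-j+1)(m₂ + m₁(k-j)) ζ_{j-1}` for `1 ≤ j ≤ k`. -/
theorem stmt_10 {k : ℕ} (T : ℝ) (hT : 0 < T) (m₁ m₂ : ℝ)
    (hm₁ : 0 ≤ m₁) (hm₂ : 0 ≤ m₂)
    (y : ℝ → Fin k → ℝ)
    (hdist : ∀ t ∈ Set.Ico (0 : ℝ) T, ∀ i j, i ≠ j → y t i ≠ y t j)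
    (hode : ∀ t ∈ Set.Ico (0 : ℝ) T, ∀ i,
      HasDerivAt (fun s => y s i)
        (-2 * m₂ - 4 * m₁ * ∑ j ∈ Finset.univ \ {i}, y t i / (y t i - y t j)) t) :
    ∀ j, 1 ≤ j → j ≤ k → ∀ t ∈ Set.Ico (0 : ℝ) T,
      HasDerivAt (fun s => esymmB j (y s))
        (-2 * ((k : ℝ) - j + 1) * (m₂ + m₁ * ((k : ℝ) - j)) * esymmB (j - 1) (y t)) t :=
  stmt_10_general T m₁ m₂ y hdist hode
end

section
/- Let g ∈ {3, 6}, n > 0, and let (r(t), θ(t)) be defined for t ∈ [0, T) by r(t) = (1-2nt)^{1/2} and θ(t) = (1/g) arccos( cos(gθ₀) / (1-2nt)^{g/2} ), where θ₀ ∈ (0, π/g) and T = (1/(2n))(1 - |cos gθ₀|^{2/g}). Then y₁(t) = r(t)² and y₂(t) = r(t)^g cos(g θ(t)) satisfy y₁'(t) = -2n, y₂'(t) = 0, with y₁(0) = 1, y₂(0) = cos(gθ₀). Moreover |cos(gθ(t))| < 1 for t ∈ [0,T) and |cos(gθ(t))| → 1 as t → T⁻ (when cos gθ₀ ≠ 0).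 -/
open Real

/-- Explicit solution of the rank-2 MCF in invariant coordinates for `g = 3` or `6`:
with `r(t) = (1-2nt)^{1/2}` and
`θ(t) = (1/g) arccos(cos(gθ₀)/(1-2nt)^{g/2})` on `[0,T)`,
`T = (1/(2n))(1 - |cos gθ₀|^{2/g})`, the invariants `y₁ = r²`, `y₂ = r^g cos(gθ)` satisfy
`y₁' = -2n`, `y₂' = 0`, `y₁(0) = 1`, `y₂(0) = cos(gθ₀)`; moreover `|cos(gθ(t))| < 1` on
`[0,T)` and `|cos(gθ(t))| → 1` as `t → T⁻` when `cos(gθ₀) ≠ 0`. -/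
theorem stmt_12 (g : ℕ) (hg : g = 3 ∨ g = 6) (n : ℝ) (hn : 0 < n)
    (θ₀ : ℝ) (hθ₀ : θ₀ ∈ Set.Ioo 0 (π / g))
    (T : ℝ) (hTdef : T = 1 / (2 * n) * (1 - |Real.cos (g * θ₀)| ^ ((2 : ℝ) / g)))
    (r θ y₁ y₂ : ℝ → ℝ)
    (hr : ∀ t, r t = Real.sqrt (1 - 2 * n * t))
    (hθ : ∀ t, θ t = (1 / g) *
      Real.arccos (Real.cos (g * θ₀) / (1 - 2 * n * t) ^ ((g : ℝ) / 2)))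
    (hy₁ : ∀ t, y₁ t = r t ^ 2)
    (hy₂ : ∀ t, y₂ t = r t ^ g * Real.cos (g * θ t)) :
    (∀ t ∈ Set.Ico (0 : ℝ) T, HasDerivAt y₁ (-(2 * n)) t ∧ HasDerivAt y₂ 0 t) ∧
      y₁ 0 = 1 ∧ y₂ 0 = Real.cos (g * θ₀) ∧
      (∀ t ∈ Set.Ico (0 : ℝ) T, |Real.cos (g * θ t)| < 1) ∧
      (Real.cos (g * θ₀) ≠ 0 →
        Filter.Tendsto (fun t => |Real.cos (g * θ t)|)
          (nhdsWithin T (Set.Iio T)) (nhds 1)) := by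
  obtain ⟨hθ₀0, hθ₀1⟩ := hθ₀
  have hgpos : (0:ℝ) < g := by rcases hg with h|h <;> simp [h]
  have hgne : (g:ℝ) ≠ 0 := ne_of_gt hgpos
  set c := Real.cos (g * θ₀) with hc
  have hx0 : 0 < (g:ℝ) * θ₀ := mul_pos hgpos hθ₀0
  have hx1 : (g:ℝ) * θ₀ < π := by
    calc (g:ℝ)*θ₀ < g * (π/g) := by exact mul_lt_mul_of_pos_left hθ₀1 hgpos
    _ = π := by field_simp
  have hsin : 0 < Real.sin ((g:ℝ)*θ₀) := Real.sin_pos_of_pos_of_lt_pi hx0 hx1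
  have hclt : |c| < 1 := by
    rw [← sq_lt_one_iff_abs_lt_one]
    nlinarith [Real.sin_sq_add_cos_sq ((g:ℝ)*θ₀)]
  set a := |c| ^ ((2:ℝ)/g) with ha
  have ha0 : 0 ≤ a := Real.rpow_nonneg (abs_nonneg _) _
  have ha1 : a < 1 := Real.rpow_lt_one (abs_nonneg _) hclt (by positivity)
  have hT2n : 2 * n * T = 1 - a := by rw [hTdef]; field_simp
  have hTpos : 0 < T := by nlinarith
  have hag : a ^ ((g:ℝ)/2) = |c| := by
    rw [ha, ← Real.rpow_mul (abs_nonneg c)]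
    rw [show (2/(g:ℝ))*((g:ℝ)/2) = 1 by field_simp, Real.rpow_one]
  have key : ∀ s, s < T → |c| < (1 - 2*n*s) ^ ((g:ℝ)/2) ∧ 0 < 1 - 2*n*s ∧
      Real.cos ((g:ℝ) * θ s) = c / (1 - 2*n*s) ^ ((g:ℝ)/2) := by
    intro s hs
    have hu : a < 1 - 2*n*s := by nlinarith
    have hu0 : 0 < 1 - 2*n*s := lt_of_le_of_lt ha0 hu
    have hgt : |c| < (1 - 2*n*s) ^ ((g:ℝ)/2) := by
      calc |c| = a ^ ((g:ℝ)/2) := hag.symm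
      _ < _ := Real.rpow_lt_rpow ha0 hu (by positivity)
    refine ⟨hgt, hu0, ?_⟩
    have hupos : 0 < (1 - 2*n*s) ^ ((g:ℝ)/2) := Real.rpow_pos_of_pos hu0 _
    have hq : |c / (1 - 2*n*s) ^ ((g:ℝ)/2)| ≤ 1 := by
      rw [abs_div, abs_of_pos hupos, div_le_one hupos]; exact le_of_lt hgt
    obtain ⟨hq1, hq2⟩ := abs_le.mp hq
    rw [hθ s]
    rw [show (g:ℝ) * ((1/(g:ℝ)) * Real.arccos (c / (1 - 2*n*s) ^ ((g:ℝ)/2))) =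
        Real.arccos (c / (1 - 2*n*s) ^ ((g:ℝ)/2)) by field_simp]
    exact Real.cos_arccos hq1 hq2
  have hrg : ∀ s, 0 ≤ 1 - 2*n*s → r s ^ g = (1 - 2*n*s) ^ ((g:ℝ)/2) := by
    intro s hs
    rw [hr s, ← Real.rpow_natCast (Real.sqrt _) g, Real.sqrt_eq_rpow,
      ← Real.rpow_mul hs, show (1:ℝ)/2 * (g:ℝ) = (g:ℝ)/2 by ring]
  have hy2c : ∀ s, s < T → y₂ s = c := by
    intro s hs
    obtain ⟨hgt, hu0, hcos⟩ := key s hs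
    have hupos : 0 < (1 - 2*n*s) ^ ((g:ℝ)/2) := Real.rpow_pos_of_pos hu0 _
    rw [hy₂ s, hcos, hrg s hu0.le, mul_comm, div_mul_cancel₀ _ (ne_of_gt hupos)]
  have hy1lin : ∀ s, s < T → y₁ s = 1 - 2*n*s := by
    intro s hs
    have hu : a < 1 - 2*n*s := by nlinarith
    have hu0 : 0 ≤ 1 - 2*n*s := le_of_lt (lt_of_le_of_lt ha0 hu)
    rw [hy₁ s, hr s, Real.sq_sqrt hu0]
  refine ⟨?_, ?_, ?_, ?_, ?_⟩
  · intro t ht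
    have hopen : Set.Iio T ∈ nhds t := Iio_mem_nhds ht.2
    constructor
    · have hlin : HasDerivAt (fun s => 1 - 2*n*s) (-(2*n)) t := by
        simpa using ((hasDerivAt_id t).const_mul (2*n)).const_sub 1
      exact hlin.congr_of_eventuallyEq
        (Filter.eventuallyEq_of_mem hopen (fun s hs => hy1lin s hs))
    · exact (hasDerivAt_const t c).congr_of_eventuallyEq
        (Filter.eventuallyEq_of_mem hopen (fun s hs => hy2c s hs))
  · rw [hy₁ 0, hr 0]; norm_num
  · exact hy2c 0 hTpos
  · intro t ht
    obtain ⟨hgt, hu0, hcos⟩ := key t ht.2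
    have hupos : 0 < (1 - 2*n*t) ^ ((g:ℝ)/2) := Real.rpow_pos_of_pos hu0 _
    rw [hcos, abs_div, abs_of_pos hupos, div_lt_one hupos]; exact hgt
  · intro hcne
    have hcabs : 0 < |c| := abs_pos.mpr hcne
    have huT : 1 - 2*n*T = a := by linarith
    have haT : 0 < a := Real.rpow_pos_of_pos hcabs _
    have h1 : ContinuousAt (fun s : ℝ => (1 - 2*n*s) ^ ((g:ℝ)/2)) T :=
      ContinuousAt.rpow_const (by fun_prop) (Or.inr (by positivity))
    have hne : (1 - 2*n*T) ^ ((g:ℝ)/2) ≠ 0 := by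
      rw [huT, hag]; exact ne_of_gt hcabs
    have hf : ContinuousAt (fun s : ℝ => |c| / (1 - 2*n*s) ^ ((g:ℝ)/2)) T :=
      continuousAt_const.div h1 hne
    have hfT : |c| / (1 - 2*n*T) ^ ((g:ℝ)/2) = 1 := by
      rw [huT, hag, div_self (ne_of_gt hcabs)]
    have htend : Filter.Tendsto (fun s : ℝ => |c| / (1 - 2*n*s) ^ ((g:ℝ)/2))
        (nhdsWithin T (Set.Iio T)) (nhds 1) := by
      have h2 : Filter.Tendsto (fun s : ℝ => |c| / (1 - 2*n*s) ^ ((g:ℝ)/2))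
          (nhdsWithin T (Set.Iio T)) (nhds (|c| / (1 - 2*n*T) ^ ((g:ℝ)/2))) :=
        hf.continuousWithinAt.tendsto
      rwa [hfT] at h2
    refine htend.congr' ?_
    filter_upwards [self_mem_nhdsWithin] with s hs
    obtain ⟨hgt, hu0, hcos⟩ := key s hs
    have hupos : 0 < (1 - 2*n*s) ^ ((g:ℝ)/2) := Real.rpow_pos_of_pos hu0 _
    rw [hcos, abs_div, abs_of_pos hupos]
end

section
/- For g = 4, m₁, m₂ > 0, n = 2(m₁+m₂), θ₀ ∈ (0, θ₄) where cos 4θ₄ = (m₂-m₁)/(m₂+m₁): the smallest T > 0 with cos 4θ₀ - 8(m₂-m₁)(T - nT²) = (1-2nT)² is T = (1/(2n))(1 - √( ((m₁+m₂)/(2m₁)) (cos 4θ₀ - (m₂-m₁)/(m₂+m₁)) )). -/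
/-!
Substituting `u = 1 - 2nT` (so that `T - nT² = (1 - u²)/(4n)`) and writing
`d = (m₂ - m₁)/(m₂ + m₁)`, the equation becomes `u² (1 - d) = cos 4θ₀ - d`, i.e. `u² = A` with `A`
the radicand. The condition `0 < θ₀ < θ₄` says exactly `d < cos 4θ₀ < 1`, hence `0 < A < 1`; the
solutions are `u = ±√A`, both with `T > 0`, and the smaller `T` belongs to `u = √A`.
-/

open Real

theorem lt_cos_of_lt_arccos {x d : ℝ} (hx₀ : 0 ≤ x) (hx : x < arccos d) : d < cos x := by
  by_contra! h
  have := arccos_le_arccos h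
  rw [arccos_cos hx₀ (hx.le.trans (arccos_le_pi d))] at this
  linarith

theorem isLeast_pos_one_sub_mul_sq_eq {a A : ℝ} (ha : 0 < a) (hA₀ : 0 ≤ A) (hA₁ : A < 1) :
    IsLeast {T : ℝ | 0 < T ∧ (1 - a * T) ^ 2 = A} ((1 - √A) / a) := by
  have hsqrt : √A < 1 := (sqrt_lt' one_pos).mpr (by simpa using hA₁)
  refine ⟨⟨div_pos (by linarith) ha, ?_⟩, ?_⟩
  · rw [mul_div_cancel₀ _ ha.ne', sub_sub_cancel, sq_sqrt hA₀]
  · rintro T ⟨-, hT⟩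
    have : 1 - a * T ≤ √A := (le_abs_self _).trans (abs_le_sqrt hT.le)
    rw [div_le_iff₀ ha]
    linarith

theorem collapse_equation_iff {m₁ m₂ n c T : ℝ} (hm₁ : m₁ ≠ 0) (hm : m₁ + m₂ ≠ 0)
    (hn : n = 2 * (m₁ + m₂)) :
    c - 8 * (m₂ - m₁) * (T - n * T ^ 2) = (1 - 2 * n * T) ^ 2 ↔
      (1 - 2 * n * T) ^ 2 = (m₁ + m₂) / (2 * m₁) * (c - (m₂ - m₁) / (m₂ + m₁)) := by
  have key : (m₁ + m₂) * (c - 8 * (m₂ - m₁) * (T - n * T ^ 2) - (1 - 2 * n * T) ^ 2) =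
      2 * m₁ * ((m₁ + m₂) / (2 * m₁) * (c - (m₂ - m₁) / (m₂ + m₁)) - (1 - 2 * n * T) ^ 2) := by
    subst hn
    rw [add_comm m₂ m₁]
    field_simp
    ring
  rw [← sub_eq_zero, ← mul_eq_zero_iff_left hm, key, mul_eq_zero_iff_left (by simpa using hm₁),
    sub_eq_zero, eq_comm]

theorem div_mul_sub_div_lt_one {m₁ m₂ c : ℝ} (hm₁ : 0 < m₁) (hm₂ : 0 < m₂) (hc : c < 1) :
    (m₁ + m₂) / (2 * m₁) * (c - (m₂ - m₁) / (m₂ + m₁)) < 1 := by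
  have hd : (m₁ + m₂) * ((m₂ - m₁) / (m₂ + m₁)) = m₂ - m₁ := by
    rw [add_comm m₁ m₂, mul_div_cancel₀ _ (by positivity)]
  rw [div_mul_eq_mul_div, div_lt_one (by positivity), mul_sub, hd]
  nlinarith

/-- Blow-up time for the rank-2, `g = 4` MCF with initial angle `θ₀ ∈ (0, θ₄)`, where
`θ₄ = (1/4) arccos((m₂-m₁)/(m₂+m₁))`: the smallest `T > 0` with
`cos 4θ₀ - 8(m₂-m₁)(T - nT²) = (1-2nT)²` is
`T = (1/(2n))(1 - √(((m₁+m₂)/(2m₁))(cos 4θ₀ - (m₂-m₁)/(m₂+m₁))))`. -/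
theorem stmt_14 (m₁ m₂ : ℝ) (hm₁ : 0 < m₁) (hm₂ : 0 < m₂) (n : ℝ)
    (hn : n = 2 * (m₁ + m₂)) (θ₀ θ₄ : ℝ)
    (hθ₄ : θ₄ = 1 / 4 * Real.arccos ((m₂ - m₁) / (m₂ + m₁)))
    (hθ₀ : θ₀ ∈ Set.Ioo 0 θ₄) :
    IsLeast {T : ℝ | 0 < T ∧
        Real.cos (4 * θ₀) - 8 * (m₂ - m₁) * (T - n * T ^ 2) = (1 - 2 * n * T) ^ 2}
      (1 / (2 * n) *
        (1 - Real.sqrt ((m₁ + m₂) / (2 * m₁) *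
          (Real.cos (4 * θ₀) - (m₂ - m₁) / (m₂ + m₁))))) := by
  obtain ⟨hθ₀_pos, hθ₀_lt⟩ := hθ₀
  have hangle : 4 * θ₀ < arccos ((m₂ - m₁) / (m₂ + m₁)) := by rw [hθ₄] at hθ₀_lt; linarith
  have hd_lt : (m₂ - m₁) / (m₂ + m₁) < cos (4 * θ₀) := lt_cos_of_lt_arccos (by linarith) hangle
  have hcos_lt : cos (4 * θ₀) < 1 := by
    simpa using cos_lt_cos_of_nonneg_of_le_pi le_rfl
      (hangle.le.trans (arccos_le_pi _)) (by linarith)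
  simp_rw [collapse_equation_iff hm₁.ne' (by positivity) hn, one_div_mul_eq_div]
  exact isLeast_pos_one_sub_mul_sq_eq (by rw [hn]; positivity)
    (mul_nonneg (by positivity) (by linarith)) (div_mul_sub_div_lt_one hm₁ hm₂ hcos_lt)
end

section
/- Let x₁, x₂ : [0,T) → ℝ^N solve the spherical mean curvature flow ODE x'(t) = -∑_{i=1}^g (m_i/⟨x(t), n_i⟩) n_i + n·x(t), where m_i > 0, n = ∑ m_i, and ⟨x_j(t), n_i⟩ < 0 for all i, j, t. Then (d/dt)‖x₁(t)-x₂(t)‖² ≥ 2n‖x₁(t)-x₂(t)‖², and hence ‖x₁(t)-x₂(t)‖ ≥ e^{nt}‖x₁(0)-x₂(0)‖ for all t ∈ [0,T). -/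
open scoped RealInnerProductSpace

open Real Set

/-!
Along two solutions the tangential term `n • x` contributes exactly `n ‖x₁ - x₂‖²` to
`⟪x₁ - x₂, x₁' - x₂'⟫`, while the Euclidean part `-∑ (mᵢ / ⟪x, nᵢ⟫) • nᵢ` is a monotone vector
field on the chamber `{⟪·, nᵢ⟫ < 0}`: its contribution is
`∑ mᵢ ⟪x₁ - x₂, nᵢ⟫² / (⟪x₁, nᵢ⟫ ⟪x₂, nᵢ⟫) ≥ 0`. Hence `(d/dt)‖x₁ - x₂‖² ≥ 2n ‖x₁ - x₂‖²`,
and `e^{-2nt} ‖x₁ - x₂‖²` is nondecreasing.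
-/

noncomputable def euclideanMCFField {ι E : Type*} [Fintype ι] [NormedAddCommGroup E]
    [InnerProductSpace ℝ E] (m : ι → ℝ) (nv : ι → E) (x : E) : E :=
  -∑ i, (m i / ⟪x, nv i⟫) • nv i

lemma div_sub_div_mul_sub_nonneg {a p q : ℝ} (ha : 0 ≤ a) (hp : p < 0) (hq : q < 0) :
    0 ≤ (a / q - a / p) * (p - q) := by
  have hpq : (a / q - a / p) * (p - q) = a * (p - q) ^ 2 / (p * q) := by
    field_simp [hp.ne, hq.ne]
  rw [hpq]
  exact div_nonneg (by positivity) (mul_pos_of_neg_of_neg hp hq).le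

section Monotone

variable {ι E : Type*} [Fintype ι] [NormedAddCommGroup E] [InnerProductSpace ℝ E]
  {m : ι → ℝ} {nv : ι → E} {x y : E}

theorem inner_sub_euclideanMCFField_sub_nonneg (hm : ∀ i, 0 ≤ m i) (hx : ∀ i, ⟪x, nv i⟫ < 0)
    (hy : ∀ i, ⟪y, nv i⟫ < 0) :
    0 ≤ ⟪x - y, euclideanMCFField m nv x - euclideanMCFField m nv y⟫ := by
  have hexpand : ⟪x - y, euclideanMCFField m nv x - euclideanMCFField m nv y⟫ =
      ∑ i, (m i / ⟪y, nv i⟫ - m i / ⟪x, nv i⟫) * (⟪x, nv i⟫ - ⟪y, nv i⟫) := by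
    simp only [euclideanMCFField, inner_sub_right, inner_neg_right, inner_sum,
      real_inner_smul_right, inner_sub_left, mul_sub, sub_mul, Finset.sum_sub_distrib]
    ring
  rw [hexpand]
  exact Finset.sum_nonneg fun i _ => div_sub_div_mul_sub_nonneg (hm i) (hx i) (hy i)

theorem mul_norm_sub_sq_le_inner_sub_euclideanMCFField_add_smul (n : ℝ) (hm : ∀ i, 0 ≤ m i)
    (hx : ∀ i, ⟪x, nv i⟫ < 0) (hy : ∀ i, ⟪y, nv i⟫ < 0) :
    n * ‖x - y‖ ^ 2 ≤
      ⟪x - y, (euclideanMCFField m nv x + n • x) - (euclideanMCFField m nv y + n • y)⟫ := by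
  have hsplit :
      ⟪x - y, (euclideanMCFField m nv x + n • x) - (euclideanMCFField m nv y + n • y)⟫ =
      ⟪x - y, euclideanMCFField m nv x - euclideanMCFField m nv y⟫ + n * ‖x - y‖ ^ 2 := by
    rw [add_sub_add_comm, ← smul_sub, inner_add_right, real_inner_smul_right,
      real_inner_self_eq_norm_sq]
  linarith [inner_sub_euclideanMCFField_sub_nonneg hm hx hy]

end Monotone

theorem exp_mul_mul_le_of_hasDerivAt {s : Set ℝ} (hs : Convex ℝ s) {f f' : ℝ → ℝ} {c : ℝ}
    (hf : ∀ t ∈ s, HasDerivAt f (f' t) t) (hle : ∀ t ∈ s, c * f t ≤ f' t)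
    {a t : ℝ} (ha : a ∈ s) (ht : t ∈ s) (hat : a ≤ t) :
    exp (c * (t - a)) * f a ≤ f t := by
  have hF : ∀ t ∈ s, HasDerivAt (fun u => exp (-c * u) * f u)
      (exp (-c * t) * (f' t - c * f t)) t := by
    intro t ht
    have hexp : HasDerivAt (fun u => exp (-c * u)) (exp (-c * t) * -c) t := by
      simpa using ((hasDerivAt_id t).const_mul (-c)).exp
    exact (hexp.mul (hf t ht)).congr_deriv (by ring)
  have hmono : MonotoneOn (fun u => exp (-c * u) * f u) s :=
    monotoneOn_of_hasDerivWithinAt_nonneg hs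
      (fun t ht => (hF t ht).continuousAt.continuousWithinAt)
      (fun t ht => (hF t (interior_subset ht)).hasDerivWithinAt)
      (fun t ht => mul_nonneg (exp_pos _).le (sub_nonneg.2 (hle t (interior_subset ht))))
  have hat' := hmono ha ht hat
  calc exp (c * (t - a)) * f a = exp (c * t) * (exp (-c * a) * f a) := by
        rw [← mul_assoc, ← exp_add]; congr 2; ring
    _ ≤ exp (c * t) * (exp (-c * t) * f t) := mul_le_mul_of_nonneg_left hat' (exp_pos _).le
    _ = f t := by rw [← mul_assoc, ← exp_add]; simp

theorem stmt_15_general {N g : ℕ} (T : ℝ)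
    (nv : Fin g → EuclideanSpace ℝ (Fin N)) (m : Fin g → ℝ)
    (hm : ∀ i, 0 < m i) (n : ℝ)
    (x₁ x₂ : ℝ → EuclideanSpace ℝ (Fin N))
    (hneg₁ : ∀ t ∈ Set.Ico (0 : ℝ) T, ∀ i, ⟪x₁ t, nv i⟫ < 0)
    (hneg₂ : ∀ t ∈ Set.Ico (0 : ℝ) T, ∀ i, ⟪x₂ t, nv i⟫ < 0)
    (hode₁ : ∀ t ∈ Set.Ico (0 : ℝ) T,
      HasDerivAt x₁ (-∑ i, (m i / ⟪x₁ t, nv i⟫) • nv i + n • x₁ t) t)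
    (hode₂ : ∀ t ∈ Set.Ico (0 : ℝ) T,
      HasDerivAt x₂ (-∑ i, (m i / ⟪x₂ t, nv i⟫) • nv i + n • x₂ t) t) :
    (∀ t ∈ Set.Ico (0 : ℝ) T,
        2 * n * ‖x₁ t - x₂ t‖ ^ 2 ≤ deriv (fun s => ‖x₁ s - x₂ s‖ ^ 2) t) ∧
      ∀ t ∈ Set.Ico (0 : ℝ) T,
        Real.exp (n * t) * ‖x₁ 0 - x₂ 0‖ ≤ ‖x₁ t - x₂ t‖ := by
  set V := fun x => euclideanMCFField m nv x + n • x
  have hderiv : ∀ t ∈ Ico (0 : ℝ) T, HasDerivAt (fun s => ‖x₁ s - x₂ s‖ ^ 2)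
      (2 * ⟪x₁ t - x₂ t, V (x₁ t) - V (x₂ t)⟫) t :=
    fun t ht => ((hode₁ t ht).sub (hode₂ t ht)).norm_sq
  have hle : ∀ t ∈ Ico (0 : ℝ) T,
      2 * n * ‖x₁ t - x₂ t‖ ^ 2 ≤ 2 * ⟪x₁ t - x₂ t, V (x₁ t) - V (x₂ t)⟫ := by
    intro t ht
    have := mul_norm_sub_sq_le_inner_sub_euclideanMCFField_add_smul n (fun i => (hm i).le)
      (hneg₁ t ht) (hneg₂ t ht)
    linarith
  refine ⟨fun t ht => (hderiv t ht).deriv ▸ hle t ht, fun t ht => ?_⟩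
  have hsq := exp_mul_mul_le_of_hasDerivAt (convex_Ico 0 T) hderiv hle
    ⟨le_rfl, ht.1.trans_lt ht.2⟩ ht ht.1
  refine (pow_le_pow_iff_left₀ (by positivity) (norm_nonneg _) two_ne_zero).1 ?_
  calc (exp (n * t) * ‖x₁ 0 - x₂ 0‖) ^ 2 = exp (2 * n * (t - 0)) * ‖x₁ 0 - x₂ 0‖ ^ 2 := by
        rw [mul_pow, ← exp_nat_mul]; congr 2; push_cast; ring
    _ ≤ ‖x₁ t - x₂ t‖ ^ 2 := hsq

/-- If `x₁, x₂` solve the spherical MCF ODE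
`x' = -∑ᵢ (mᵢ/⟨x, nᵢ⟩) • nᵢ + n • x` in the chamber `{⟨·, nᵢ⟩ < 0}`, then
`(d/dt)‖x₁ - x₂‖² ≥ 2n‖x₁ - x₂‖²`, and hence
`‖x₁ t - x₂ t‖ ≥ e^{nt} ‖x₁ 0 - x₂ 0‖` on `[0,T)`. -/
theorem stmt_15 {N g : ℕ} (T : ℝ) (hT : 0 < T)
    (nv : Fin g → EuclideanSpace ℝ (Fin N)) (m : Fin g → ℝ)
    (hm : ∀ i, 0 < m i) (n : ℝ) (hn : n = ∑ i, m i)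
    (x₁ x₂ : ℝ → EuclideanSpace ℝ (Fin N))
    (hneg₁ : ∀ t ∈ Set.Ico (0 : ℝ) T, ∀ i, ⟪x₁ t, nv i⟫ < 0)
    (hneg₂ : ∀ t ∈ Set.Ico (0 : ℝ) T, ∀ i, ⟪x₂ t, nv i⟫ < 0)
    (hode₁ : ∀ t ∈ Set.Ico (0 : ℝ) T,
      HasDerivAt x₁ (-∑ i, (m i / ⟪x₁ t, nv i⟫) • nv i + n • x₁ t) t)
    (hode₂ : ∀ t ∈ Set.Ico (0 : ℝ) T,
      HasDerivAt x₂ (-∑ i, (m i / ⟪x₂ t, nv i⟫) • nv i + n • x₂ t) t) :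
    (∀ t ∈ Set.Ico (0 : ℝ) T,
        2 * n * ‖x₁ t - x₂ t‖ ^ 2 ≤ deriv (fun s => ‖x₁ s - x₂ s‖ ^ 2) t) ∧
      ∀ t ∈ Set.Ico (0 : ℝ) T,
        Real.exp (n * t) * ‖x₁ 0 - x₂ 0‖ ≤ ‖x₁ t - x₂ t‖ :=
  stmt_15_general T nv m hm n x₁ x₂ hneg₁ hneg₂ hode₁ hode₂
end
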